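/- Let n ≥ 2, s ∈ {1,…,n}, and t ∈ (0,1]. Then the sparse unit-capped simplex Δ⁺_{t,ℓ₀} ⊆ ℝⁿ is nonempty if and only if s·t ≥ 1. Moreover, for any w₁, w₂ ∈ Δ⁺_{t,ℓ₀}, ‖w₁ − w₂‖₂ ≤ √(2(k t² + r²)), where k = ⌊1/t⌋ and r = 1 − k t ∈ [0, t). In particular, if 1/t is a positive integer, then ‖w₁ − w₂‖₂ ≤ √(2t). -/

import Mathlib

noncomputable section

/-- The sparse unit-capped simplex `Δ⁺_{t,ℓ₀} ⊆ ℝⁿ` (with the Euclidean norm). -/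
def sparseCappedSimplex (n : ℕ) (t : ℝ) (s : ℕ) : Set (EuclideanSpace ℝ (Fin n)) :=
  {w | (∑ i, w i) = 1 ∧ (∀ i, 0 ≤ w i ∧ w i ≤ t) ∧
       ∃ S : Finset (Fin n), S.card ≤ s ∧ ∀ i ∉ S, w i = 0}

lemma scs_pair (u v : ℝ) (hu0 : 0 ≤ u) (hu1 : u ≤ 1) (hv0 : 0 ≤ v) (hv1 : v ≤ 1) :
    Int.fract (u + v) * (1 - Int.fract (u + v)) ≤ u*(1-u) + v*(1-v) := by
  rcases lt_or_ge (u+v) 1 with h | h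
  · rw [Int.fract_eq_self.2 ⟨by positivity, h⟩]; nlinarith
  · rcases lt_or_eq_of_le (by linarith : u + v ≤ 2) with h2 | h2
    · have : Int.fract (u+v) = u+v-1 := by
        rw [← Int.fract_sub_intCast (u+v) 1,
          show u+v-(1:ℤ) = u+v-1 by push_cast; ring,
          Int.fract_eq_self.2 ⟨by linarith, by linarith⟩]
      rw [this]; nlinarith
    · have : Int.fract (u+v) = 0 := by rw [h2]; norm_num
      rw [this]; nlinarith

lemma scs_fract_sum {ι : Type*} [DecidableEq ι] (S : Finset ι) (u : ι → ℝ)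
    (h : ∀ i ∈ S, 0 ≤ u i ∧ u i ≤ 1) :
    Int.fract (∑ i ∈ S, u i) * (1 - Int.fract (∑ i ∈ S, u i)) ≤ ∑ i ∈ S, u i * (1 - u i) := by
  induction S using Finset.induction with
  | empty => simp
  | @insert a S ha ih =>
    rw [Finset.sum_insert ha, Finset.sum_insert ha]
    have hfr : Int.fract (u a + ∑ i ∈ S, u i)
        = Int.fract (u a + Int.fract (∑ i ∈ S, u i)) := by
      conv_lhs => rw [show u a + ∑ i ∈ S, u i
        = (u a + Int.fract (∑ i ∈ S, u i)) + (⌊∑ i ∈ S, u i⌋ : ℤ) by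
          rw [Int.fract]; ring]
      rw [Int.fract_add_intCast]
    have hIH := ih (fun i hi => h i (Finset.mem_insert_of_mem hi))
    have ha1 := h a (Finset.mem_insert_self a S)
    have hp := scs_pair (u a) (Int.fract (∑ i ∈ S, u i)) ha1.1 ha1.2
      (Int.fract_nonneg _) (le_of_lt (Int.fract_lt_one _))
    rw [hfr]
    nlinarith [Int.fract_nonneg (∑ i ∈ S, u i), Int.fract_lt_one (∑ i ∈ S, u i)]

lemma scs_sq_bound (n : ℕ) (t : ℝ) (ht0 : 0 < t) (w : Fin n → ℝ)
    (hsum : ∑ i, w i = 1) (hbd : ∀ i, 0 ≤ w i ∧ w i ≤ t) :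
    ∑ i, (w i)^2 ≤ (⌊1/t⌋₊ : ℝ) * t^2 + (1 - (⌊1/t⌋₊:ℝ) * t)^2 := by
  have hfr : Int.fract (∑ i, w i / t) * (1 - Int.fract (∑ i, w i / t))
      ≤ ∑ i, (w i / t) * (1 - w i / t) :=
    scs_fract_sum Finset.univ (fun i => w i / t) (fun i _ =>
      ⟨div_nonneg (hbd i).1 ht0.le, by
        rw [div_le_one ht0]; exact (hbd i).2⟩)
  have hsum' : ∑ i, w i / t = 1/t := by rw [← Finset.sum_div, hsum]
  have hfl : ((⌊1/t⌋₊ : ℝ)) = (⌊(1:ℝ)/t⌋ : ℤ) := by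
    exact natCast_floor_eq_intCast_floor (by positivity)
  have hfr2 : Int.fract (1/t) = 1/t - (⌊1/t⌋₊ : ℝ) := by
    rw [Int.fract, hfl]
  rw [hsum', hfr2] at hfr
  set k : ℝ := (⌊1/t⌋₊ : ℝ) with hk
  have key : (1 - k*t) * (t - (1 - k*t)) ≤ ∑ i, w i * (t - w i) := by
    have e1 : ∑ i, w i * (t - w i) = t^2 * ∑ i, (w i / t) * (1 - w i / t) := by
      rw [Finset.mul_sum]; apply Finset.sum_congr rfl; intro i _; field_simp
    have e2 : (1 - k*t) * (t - (1 - k*t))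
        = t^2 * ((1/t - k) * (1 - (1/t - k))) := by field_simp
    rw [e1, e2]
    exact mul_le_mul_of_nonneg_left hfr (by positivity)
  have e3 : ∑ i, (w i)^2 = t - ∑ i, w i * (t - w i) := by
    have : ∑ i, w i * (t - w i) = t * (∑ i, w i) - ∑ i, (w i)^2 := by
      rw [Finset.mul_sum, ← Finset.sum_sub_distrib]
      apply Finset.sum_congr rfl; intro i _; ring
    rw [this, hsum]; ring
  nlinarith

open RealInnerProductSpace

/-- The main diameter estimate. -/
lemma scs_norm_bound (n s : ℕ) (t : ℝ) (ht0 : 0 < t)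
    (w₁ : EuclideanSpace ℝ (Fin n)) (hw₁ : w₁ ∈ sparseCappedSimplex n t s)
    (w₂ : EuclideanSpace ℝ (Fin n)) (hw₂ : w₂ ∈ sparseCappedSimplex n t s) :
    ‖w₁ - w₂‖ ≤
      Real.sqrt (2 * ((⌊1 / t⌋₊ : ℝ) * t ^ 2 + (1 - (⌊1 / t⌋₊ : ℝ) * t) ^ 2)) := by
  obtain ⟨h1s, h1b, -⟩ := hw₁
  obtain ⟨h2s, h2b, -⟩ := hw₂
  have h1 := scs_sq_bound n t ht0 w₁ h1s h1b
  have h2 := scs_sq_bound n t ht0 w₂ h2s h2b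
  have hinner : (0:ℝ) ≤ ⟪w₁, w₂⟫ := by
    rw [PiLp.inner_apply]
    apply Finset.sum_nonneg
    intro i _
    simp only [RCLike.inner_apply, starRingEnd_apply, star_trivial]
    exact mul_nonneg (h2b i).1 (h1b i).1
  have hn1 : ‖w₁‖^2 = ∑ i, (w₁ i)^2 := by
    rw [← real_inner_self_eq_norm_sq, PiLp.inner_apply]
    apply Finset.sum_congr rfl; intro i _; simp [RCLike.inner_apply]
  have hn2 : ‖w₂‖^2 = ∑ i, (w₂ i)^2 := by
    rw [← real_inner_self_eq_norm_sq, PiLp.inner_apply]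
    apply Finset.sum_congr rfl; intro i _; simp [RCLike.inner_apply]
  have hsq : ‖w₁ - w₂‖^2 ≤ 2 * ((⌊1 / t⌋₊ : ℝ) * t ^ 2 + (1 - (⌊1 / t⌋₊ : ℝ) * t) ^ 2) := by
    have := norm_sub_sq_real w₁ w₂
    rw [this, hn1, hn2]
    nlinarith
  calc ‖w₁ - w₂‖ = Real.sqrt (‖w₁ - w₂‖^2) := (Real.sqrt_sq (norm_nonneg _)).symm
  _ ≤ _ := Real.sqrt_le_sqrt hsq

/-- Feasibility and diameter of the sparse unit-capped simplex: it is nonempty iff `s·t ≥ 1`,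
any two of its points are at Euclidean distance at most `√(2(k t² + r²))` where `k = ⌊1/t⌋`
and `r = 1 - k t`, and if `1/t` is a positive integer the bound is `√(2t)`. -/
theorem stmt1 (n s : ℕ) (t : ℝ) (hn : 2 ≤ n) (hs1 : 1 ≤ s) (hsn : s ≤ n)
    (ht0 : 0 < t) (ht1 : t ≤ 1) :
    ((sparseCappedSimplex n t s).Nonempty ↔ 1 ≤ (s : ℝ) * t) ∧
    (∀ w₁ ∈ sparseCappedSimplex n t s, ∀ w₂ ∈ sparseCappedSimplex n t s,
      ‖w₁ - w₂‖ ≤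
        Real.sqrt (2 * ((⌊1 / t⌋₊ : ℝ) * t ^ 2 + (1 - (⌊1 / t⌋₊ : ℝ) * t) ^ 2))) ∧
    ((∃ m : ℕ, 0 < m ∧ (m : ℝ) = 1 / t) →
      ∀ w₁ ∈ sparseCappedSimplex n t s, ∀ w₂ ∈ sparseCappedSimplex n t s,
        ‖w₁ - w₂‖ ≤ Real.sqrt (2 * t)) := by
  -- basic facts about k = ⌊1/t⌋₊ and r = 1 - k t
  set k : ℕ := ⌊1/t⌋₊ with hkdef
  have hkt : (k:ℝ) * t ≤ 1 := by
    calc (k:ℝ) * t ≤ (1/t) * t :=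
          mul_le_mul_of_nonneg_right (Nat.floor_le (by positivity)) ht0.le
    _ = 1 := by field_simp
  have hk1 : 1 ≤ k := by
    apply Nat.le_floor
    rw [le_div_iff₀ ht0]; push_cast; linarith
  have hrt : 1 - (k:ℝ) * t < t := by
    have := Nat.lt_floor_add_one ((1:ℝ)/t)
    have h2 : 1/t < (k:ℝ) + 1 := by exact_mod_cast this
    have h3 : 1 < ((k:ℝ) + 1) * t := (div_lt_iff₀ ht0).1 h2
    nlinarith
  refine ⟨⟨?_, ?_⟩, ?_, ?_⟩
  · -- nonempty → 1 ≤ s t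
    rintro ⟨w, hsum, hbd, S, hScard, hS0⟩
    have h1 : (1:ℝ) = ∑ i ∈ S, w i := by
      rw [← hsum]
      exact (Finset.sum_subset (Finset.subset_univ S) (fun i _ hi => hS0 i hi)).symm
    have h2 : ∑ i ∈ S, w i ≤ S.card * t := by
      calc ∑ i ∈ S, w i ≤ ∑ _i ∈ S, t := Finset.sum_le_sum (fun i _ => (hbd i).2)
      _ = S.card * t := by rw [Finset.sum_const, nsmul_eq_mul]
    have h3 : (S.card : ℝ) * t ≤ s * t := by
      apply mul_le_mul_of_nonneg_right _ ht0.le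
      exact_mod_cast hScard
    linarith
  · -- 1 ≤ s t → nonempty
    intro hst
    rcases eq_or_lt_of_le hkt with hr0 | hrpos
    · -- r = 0 : use k coordinates each equal to t
      have hks : k ≤ s := by
        have : (k:ℝ) ≤ (s:ℝ) := by
          rw [← mul_le_mul_iff_left₀ ht0]; linarith
        exact_mod_cast this
      have hbn : k - 1 < n := by omega
      set b : Fin n := ⟨k - 1, hbn⟩ with hbdef
      refine ⟨WithLp.toLp 2 (fun i => if i ∈ Finset.Iic b then t else 0 : Fin n → ℝ), ?_, ?_, Finset.Iic b, ?_, ?_⟩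
      · simp only [PiLp.toLp_apply]
        rw [Finset.sum_ite_mem, Finset.univ_inter, Finset.sum_const, nsmul_eq_mul,
          Fin.card_Iic]
        simp only [hbdef]
        have : (k - 1 : ℕ) + 1 = k := by omega
        rw [this]
        linarith
      · intro i
        by_cases h : i ∈ Finset.Iic b <;> simp [h, ht0.le]
      · rw [Fin.card_Iic]; have : (b : ℕ) = k - 1 := rfl; omega
      · intro i hi; simp [hi]
    · -- r > 0 : use k coordinates equal to t and one equal to r
      set r : ℝ := 1 - (k:ℝ) * t with hrdef
      have hrpos' : 0 < r := by simp [hrdef]; linarith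
      have hks : k < s := by
        have : (k:ℝ) < (s:ℝ) := by
          rw [← mul_lt_mul_iff_left₀ ht0]; linarith
        exact_mod_cast this
      have hbn : k < n := lt_of_lt_of_le hks hsn
      set b : Fin n := ⟨k, hbn⟩ with hbdef
      refine ⟨WithLp.toLp 2 (fun i => (if i ∈ Finset.Iio b then t else 0) +
          (if i = b then r else 0) : Fin n → ℝ), ?_, ?_, Finset.Iic b, ?_, ?_⟩
      · simp only [PiLp.toLp_apply]
        rw [Finset.sum_add_distrib, Finset.sum_ite_mem, Finset.univ_inter,
          Finset.sum_const, nsmul_eq_mul, Fin.card_Iio, Finset.sum_ite_eq' Finset.univ b]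
        simp [hbdef, hrdef]
      · intro i
        rcases lt_trichotomy i b with h | h | h
        · simp [Finset.mem_Iio.2 h, ne_of_lt h, ht0.le]
        · simp [h, hrpos'.le, hrt.le, hrdef]; constructor <;> linarith
        · simp only [PiLp.toLp_apply, Finset.mem_Iio, not_lt.2 h.le, if_false, h.ne', if_false]
          norm_num [ht0.le]
      · rw [Fin.card_Iic]; simpa using hks
      · intro i hi
        have hib : b < i := by simpa using hi
        simp only [PiLp.toLp_apply, Finset.mem_Iio, not_lt.2 hib.le, if_false, hib.ne', if_false, add_zero]
  · -- diameter bound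
    intro w₁ h₁ w₂ h₂
    exact scs_norm_bound n s t ht0 w₁ h₁ w₂ h₂
  · -- integer 1/t case
    rintro ⟨m, hm0, hmt⟩ w₁ h₁ w₂ h₂
    have hkm : k = m := by
      rw [hkdef, ← hmt, Nat.floor_natCast]
    have hmt' : (m:ℝ) * t = 1 := by
      rw [hmt]; field_simp
    have hb := scs_norm_bound n s t ht0 w₁ h₁ w₂ h₂
    have : 2 * ((⌊1 / t⌋₊ : ℝ) * t ^ 2 + (1 - (⌊1 / t⌋₊ : ℝ) * t) ^ 2) = 2 * t := by
      rw [← hkdef, hkm]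
      nlinarith
    rwa [this] at hb
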